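/- For a C¹ vector field Z(x′, t′) : ℝ³ × ℝ → ℝ³ and retarded time t′ = t − r/c with r = ‖x − x′‖, the curl with respect to x of the retarded quotient satisfies ∇_x × ([Z]/r) = ((1/r³)[Z] + (1/(r² c))[∂Z/∂t′]) × r⃗, for x ≠ x′, where r⃗ = x − x′. -/

import Mathlib

/-! `[Z]/r` is a radial field `y ↦ G ‖y - x'‖` with profile `G s = s⁻¹ • Z (x', t - s / c)`.
For a radial field `∇ × G(r) = ∇r × G'(r) = (r⃗ / r) × G'(r) = (-G'(r) / r) × r⃗`, and the chain
rule gives `-G'(r) / r = [Z] / r³ + [∂Z/∂t′] / (r² c)`. -/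

/-- Partial derivative in the `i`-th coordinate direction on ℝ³. -/
noncomputable def pd (i : Fin 3) (f : EuclideanSpace ℝ (Fin 3) → ℝ)
    (x : EuclideanSpace ℝ (Fin 3)) : ℝ :=
  fderiv ℝ f x (EuclideanSpace.single i 1)

/-- The curl of a vector field on ℝ³. -/
noncomputable def curl (a : EuclideanSpace ℝ (Fin 3) → EuclideanSpace ℝ (Fin 3))
    (x : EuclideanSpace ℝ (Fin 3)) : Fin 3 → ℝ :=
  ![pd 1 (fun y => a y 2) x - pd 2 (fun y => a y 1) x,
    pd 2 (fun y => a y 0) x - pd 0 (fun y => a y 2) x,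
    pd 0 (fun y => a y 1) x - pd 1 (fun y => a y 0) x]

/-- The cross product of two vectors in ℝ³. -/
def cross3 (a b : Fin 3 → ℝ) : Fin 3 → ℝ :=
  ![a 1 * b 2 - a 2 * b 1, a 2 * b 0 - a 0 * b 2, a 0 * b 1 - a 1 * b 0]

section InnerProductSpace

variable {E : Type*} [NormedAddCommGroup E] [InnerProductSpace ℝ E]

theorem hasFDerivAt_norm_sub {x x' : E} (hx : x ≠ x') :
    HasFDerivAt (fun y => ‖y - x'‖) (‖x - x'‖⁻¹ • innerSL ℝ (x - x')) x := by
  have hr : ‖x - x'‖ ≠ 0 := norm_ne_zero_iff.2 (sub_ne_zero.2 hx)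
  have h := ((hasFDerivAt_sub_const x').norm_sq).sqrt (pow_ne_zero 2 hr)
  simp only [Real.sqrt_sq (norm_nonneg _)] at h
  refine h.congr_fderiv ?_
  rw [ContinuousLinearMap.comp_id, ← Nat.cast_smul_eq_nsmul ℝ, smul_smul]
  congr 1
  push_cast
  field_simp

theorem HasDerivAt.hasFDerivAt_comp_norm_sub {g : ℝ → ℝ} {g' : ℝ} {x x' : E}
    (hg : HasDerivAt g g' ‖x - x'‖) (hx : x ≠ x') :
    HasFDerivAt (fun y => g ‖y - x'‖) ((g' / ‖x - x'‖) • innerSL ℝ (x - x')) x := by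
  refine (hg.comp_hasFDerivAt x (hasFDerivAt_norm_sub hx)).congr_fderiv ?_
  rw [smul_smul, div_eq_mul_inv]

end InnerProductSpace

theorem pd_comp_norm_sub {g : ℝ → ℝ} {g' : ℝ} {x x' : EuclideanSpace ℝ (Fin 3)}
    (hg : HasDerivAt g g' ‖x - x'‖) (hx : x ≠ x') (i : Fin 3) :
    pd i (fun y => g ‖y - x'‖) x = g' / ‖x - x'‖ * (x - x') i := by
  rw [pd, (hg.hasFDerivAt_comp_norm_sub hx).fderiv]
  simp [EuclideanSpace.inner_single_right]

theorem curl_comp_norm_sub {G : ℝ → EuclideanSpace ℝ (Fin 3)} {G' : Fin 3 → ℝ}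
    {x x' : EuclideanSpace ℝ (Fin 3)} (hG : ∀ j, HasDerivAt (fun s => G s j) (G' j) ‖x - x'‖)
    (hx : x ≠ x') :
    curl (fun y => G ‖y - x'‖) x = cross3 (fun j => -(G' j / ‖x - x'‖)) (fun i => (x - x') i) := by
  simp only [curl, cross3, pd_comp_norm_sub (hG _) hx]
  ext k
  fin_cases k <;> simp only [Fin.reduceFinMk, Matrix.cons_val] <;> ring

theorem hasDerivAt_inv_mul_comp_sub_div {z : ℝ → ℝ} {z' t c r : ℝ}
    (hz : HasDerivAt z z' (t - r / c)) (hr : r ≠ 0) :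
    HasDerivAt (fun s => s⁻¹ * z (t - s / c)) (-(r ^ 2)⁻¹ * z (t - r / c) + r⁻¹ * (-c⁻¹ * z')) r := by
  have hret : HasDerivAt (fun s => t - s / c) (-c⁻¹) r := by
    simpa [div_eq_mul_inv] using ((hasDerivAt_id r).mul_const c⁻¹).const_sub t
  exact ((hasDerivAt_inv hr).mul (hz.comp r hret)).congr_deriv (by simp only [Function.comp]; ring)

theorem curl_retarded_quotient_general
    (Z : EuclideanSpace ℝ (Fin 3) × ℝ → EuclideanSpace ℝ (Fin 3)) (hZ : ContDiff ℝ 1 Z)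
    (c : ℝ) (x' : EuclideanSpace ℝ (Fin 3))
    (x : EuclideanSpace ℝ (Fin 3)) (hx : x ≠ x') (t : ℝ) :
    curl (fun y => (‖y - x'‖)⁻¹ • Z (x', t - ‖y - x'‖ / c)) x =
      cross3
        (fun i => (‖x - x'‖ ^ 3)⁻¹ * Z (x', t - ‖x - x'‖ / c) i
          + (‖x - x'‖ ^ 2 * c)⁻¹ * deriv (fun s => Z (x', s) i) (t - ‖x - x'‖ / c))
        (fun i => (x - x') i) := by
  have hr : ‖x - x'‖ ≠ 0 := norm_ne_zero_iff.2 (sub_ne_zero.2 hx)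
  have hZ_time (j : Fin 3) (s : ℝ) : DifferentiableAt ℝ (fun s => Z (x', s) j) s := by
    have := hZ.differentiable one_ne_zero
    fun_prop
  rw [curl_comp_norm_sub (G := fun s => s⁻¹ • Z (x', t - s / c))
    (fun j => by simpa using hasDerivAt_inv_mul_comp_sub_div (hZ_time j _).hasDerivAt hr) hx]
  congr 1
  funext j
  field_simp
  ring

/-- Curl of the retarded quotient [Z]/r:
∇ₓ × ([Z]/r) = ((1/r³)[Z] + (1/(r²c))[∂Z/∂t′]) × r⃗,
where [Z](x,t) = Z(x′, t − ‖x−x′‖/c) and r⃗ = x − x′. -/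
theorem curl_retarded_quotient
    (Z : EuclideanSpace ℝ (Fin 3) × ℝ → EuclideanSpace ℝ (Fin 3)) (hZ : ContDiff ℝ 1 Z)
    (c : ℝ) (hc : 0 < c) (x' : EuclideanSpace ℝ (Fin 3))
    (x : EuclideanSpace ℝ (Fin 3)) (hx : x ≠ x') (t : ℝ) :
    curl (fun y => (‖y - x'‖)⁻¹ • Z (x', t - ‖y - x'‖ / c)) x =
      cross3
        (fun i => (‖x - x'‖ ^ 3)⁻¹ * Z (x', t - ‖x - x'‖ / c) i
          + (‖x - x'‖ ^ 2 * c)⁻¹ * deriv (fun s => Z (x', s) i) (t - ‖x - x'‖ / c))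
        (fun i => (x - x') i) :=
  curl_retarded_quotient_general Z hZ c x' x hx t
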